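/- arXiv:math/0105102 — 2 statements merged into one kernel-verified Lean document; each statement's English description precedes it below -/
import Mathlib

section
/- Let R_d = ℚ[u_1,…,u_d] / (relations: (1 + u_1 + ⋯ + u_{d-1})·(1 - u_1 + u_2 - ⋯ + (-1)^{d-1}u_{d-1}) = 1 in each positive degree, and u_d = 0), graded with deg u_j = j. Then every nonzero homogeneous element of R_d has degree at most d(d-1)/2. -/
open scoped BigOperators

/-- Grading weight: variable `i : Fin d` represents `u_{i+1}` of degree `i+1`. -/
def lagWeight (d : ℕ) : Fin d → ℕ := fun i => (i : ℕ) + 1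

/-- `F = (1 + ∑_{j=1}^{d-1} u_j)(1 + ∑_{j=1}^{d-1} (-1)^j u_j) - 1` in `ℚ[u_1,…,u_d]`. -/
noncomputable def lagF (d : ℕ) : MvPolynomial (Fin d) ℚ :=
  (1 + ∑ i : Fin d, if (i : ℕ) + 1 ≤ d - 1 then MvPolynomial.X i else 0) *
    (1 + ∑ i : Fin d, if (i : ℕ) + 1 ≤ d - 1 then
      (-1) ^ ((i : ℕ) + 1) * MvPolynomial.X i else 0) - 1

/-- The ideal generated by `u_d` and the positive-degree weighted-homogeneous
components of `F`, defining `R_d = ℚ[u_1,…,u_d]/(F = 0, u_d = 0)`. -/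
noncomputable def lagIdeal (d : ℕ) : Ideal (MvPolynomial (Fin d) ℚ) :=
  Ideal.span
    ({p | ∃ n, 1 ≤ n ∧
        p = MvPolynomial.weightedHomogeneousComponent (lagWeight d) n (lagF d)} ∪
      {p | ∃ i : Fin d, (i : ℕ) = d - 1 ∧ p = MvPolynomial.X i})

/-! Since `u_d = 0`, it suffices to treat monomials `u^α` of degree `> d(d-1)/2` not divisible
by `u_d`. Such a monomial is not square-free, as square-free ones have degree at most
`1 + ⋯ + (d-1)`. So some `u_j` with `j < d` occurs squared, and the relation of degree `2j`, in
which `u_j^2` has coefficient `(-1)^j` and every other monomial is `u_{2j}` or `u_a u_b` with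
`a + b = 2j`, `a ≠ b`, rewrites `u^α` as a combination of monomials of the same degree and
strictly larger `∑ α_i i^2`. As `∑ α_i i^2 ≤ d · deg u^α`, this rewriting terminates. -/

open MvPolynomial Finsupp

theorem MvPolynomial.monomial_add_mem_of_coeff_ne_zero {σ K : Type*} [Field K]
    {I : Ideal (MvPolynomial σ K)} {q : MvPolynomial σ K} (hq : q ∈ I) {γ₀ : σ →₀ ℕ}
    (hγ₀ : q.coeff γ₀ ≠ 0) (β : σ →₀ ℕ)
    (h : ∀ γ ∈ q.support, γ ≠ γ₀ → monomial (β + γ) (1 : K) ∈ I) :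
    monomial (β + γ₀) (1 : K) ∈ I := by
  classical
  have hexpand : monomial β 1 * q = C (q.coeff γ₀) * monomial (β + γ₀) 1 +
      ∑ γ ∈ q.support.erase γ₀, C (q.coeff γ) * monomial (β + γ) 1 := by
    conv_lhs => rw [← q.support_sum_monomial_coeff]
    rw [Finset.mul_sum, ← Finset.add_sum_erase _ _ (mem_support_iff.2 hγ₀)]
    simp only [monomial_mul, one_mul, C_mul_monomial, mul_one]
  rw [← Ideal.unit_mul_mem_iff_mem I (hγ₀.isUnit.map C), eq_sub_of_add_eq hexpand.symm]
  refine I.sub_mem (I.mul_mem_left _ hq) (I.sum_mem fun γ hγ => I.mul_mem_left _ ?_)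
  exact h γ (Finset.mem_of_mem_erase hγ) (Finset.ne_of_mem_erase hγ)

theorem MvPolynomial.coeff_single_two_mul {σ R : Type*} [CommSemiring R]
    {p q : MvPolynomial σ R} (hp : p.totalDegree ≤ 1) (hq : q.totalDegree ≤ 1) (v : σ) :
    (p * q).coeff (single v 2) = p.coeff (single v 1) * q.coeff (single v 1) := by
  classical
  have h2 : ∀ r : MvPolynomial σ R, r.totalDegree ≤ 1 → r.coeff (single v 2) = 0 :=
    fun r hr => coeff_eq_zero_of_totalDegree_lt (by simp; omega)
  rw [coeff_mul, antidiagonal_single, Finset.sum_map]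
  simp only [Finset.Nat.sum_antidiagonal_succ, Finset.Nat.antidiagonal_zero, Finset.sum_singleton]
  simp [h2 p hp, h2 q hq]

namespace Finsupp

variable {σ : Type*}

theorem eq_zero_or_exists_eq_single_add (a : σ →₀ ℕ) :
    a = 0 ∨ ∃ i b, a = single i 1 + b := by
  obtain rfl | hne := eq_or_ne a 0
  · exact Or.inl rfl
  obtain ⟨i, hi⟩ := Finsupp.ne_iff.1 hne
  refine Or.inr ⟨i, a - single i 1, (add_tsub_cancel_of_le (single_le_iff.2 ?_)).symm⟩
  simp only [coe_zero, Pi.zero_apply] at hi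
  omega

theorem weight_sq_single_two_lt {w : σ → ℕ} (hw : w.Injective) {v : σ} (hv : w v ≠ 0)
    {γ : σ →₀ ℕ} (hγ : γ.degree ≤ 2) (hwt : weight w γ = weight w (single v 2))
    (hne : γ ≠ single v 2) :
    weight (w ^ 2) (single v 2) < weight (w ^ 2) γ := by
  obtain rfl | ⟨i, b, rfl⟩ := eq_zero_or_exists_eq_single_add γ
  · simp [weight_single] at hwt
    omega
  obtain rfl | ⟨j, c, rfl⟩ := eq_zero_or_exists_eq_single_add b
  · simp [weight_single] at hwt ⊢
    nlinarith [Nat.pos_of_ne_zero hv]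
  obtain rfl : c = 0 := by
    rw [← degree_eq_zero_iff]
    simp only [map_add, degree_single] at hγ
    omega
  simp only [add_zero, map_add, weight_single, smul_eq_mul, one_mul, Pi.pow_apply] at hwt ⊢
  have hi : w i ≠ w v := by
    intro hiv
    obtain rfl : i = v := hw hiv
    obtain rfl : j = i := hw (by omega)
    exact hne (by simp [← single_add])
  rcases lt_or_gt_of_ne hi with h | h <;> nlinarith

theorem weight_sq_le_mul_weight {w : σ → ℕ} {N : ℕ} (hw : ∀ i, w i ≤ N) (γ : σ →₀ ℕ) :
    weight (w ^ 2) γ ≤ N * weight w γ := by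
  simp only [weight_apply, Finsupp.mul_sum]
  refine Finset.sum_le_sum fun i _ => ?_
  simp only [Pi.pow_apply, smul_eq_mul]
  calc γ i * w i ^ 2 = γ i * w i * w i := by ring
    _ ≤ γ i * w i * N := Nat.mul_le_mul_left _ (hw i)
    _ = N * (γ i * w i) := by ring

end Finsupp

noncomputable def lagChernPoly (d : ℕ) (t : ℚ) : MvPolynomial (Fin d) ℚ :=
  1 + ∑ i : Fin d, if (i : ℕ) + 1 ≤ d - 1 then C (t ^ ((i : ℕ) + 1)) * X i else 0

theorem lagF_eq_lagChernPoly (d : ℕ) : lagF d = lagChernPoly d 1 * lagChernPoly d (-1) - 1 := by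
  simp [lagF, lagChernPoly]

theorem totalDegree_lagChernPoly_le (d : ℕ) (t : ℚ) : (lagChernPoly d t).totalDegree ≤ 1 := by
  refine (totalDegree_add _ _).trans (max_le (by simp) (totalDegree_finsetSum_le fun i _ => ?_))
  split_ifs
  · exact (totalDegree_mul _ _).trans (by rw [totalDegree_C, totalDegree_X])
  · simp

theorem coeff_single_one_lagChernPoly {d : ℕ} (t : ℚ) {v : Fin d} (hv : (v : ℕ) + 1 ≤ d - 1) :
    (lagChernPoly d t).coeff (single v 1) = t ^ ((v : ℕ) + 1) := by
  classical
  simp only [lagChernPoly, coeff_add, coeff_sum, apply_ite (coeff _), coeff_C_mul, coeff_X,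
    single_left_inj one_ne_zero, coeff_zero]
  rw [Finset.sum_eq_single v (fun i _ hi => by simp [hi]) (by simp), coeff_one,
    if_neg (single_ne_zero.2 one_ne_zero).symm, if_pos (by omega), if_pos rfl, zero_add, mul_one]

theorem totalDegree_lagF_le (d : ℕ) : (lagF d).totalDegree ≤ 2 := by
  rw [lagF_eq_lagChernPoly]
  refine (totalDegree_sub _ _).trans (max_le ((totalDegree_mul _ _).trans ?_) (by simp))
  linarith [totalDegree_lagChernPoly_le d 1, totalDegree_lagChernPoly_le d (-1)]

noncomputable def lagRelation (d : ℕ) (v : Fin d) : MvPolynomial (Fin d) ℚ :=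
  weightedHomogeneousComponent (lagWeight d) (2 * ((v : ℕ) + 1)) (lagF d)

theorem lagRelation_mem_lagIdeal (d : ℕ) (v : Fin d) : lagRelation d v ∈ lagIdeal d :=
  Ideal.subset_span (Or.inl ⟨_, by omega, rfl⟩)

theorem weight_lagWeight_single_two {d : ℕ} (v : Fin d) :
    weight (lagWeight d) (single v 2) = 2 * ((v : ℕ) + 1) := by
  simp [weight_single, lagWeight]

theorem coeff_single_two_lagRelation {d : ℕ} {v : Fin d} (hv : (v : ℕ) + 1 ≤ d - 1) :
    (lagRelation d v).coeff (single v 2) = (-1) ^ ((v : ℕ) + 1) := by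
  rw [lagRelation, coeff_weightedHomogeneousComponent, if_pos (weight_lagWeight_single_two v),
    lagF_eq_lagChernPoly, coeff_sub, coeff_single_two_mul (totalDegree_lagChernPoly_le d 1)
      (totalDegree_lagChernPoly_le d (-1)), coeff_single_one_lagChernPoly _ hv,
    coeff_single_one_lagChernPoly _ hv]
  classical
  simp [coeff_one, (single_ne_zero.2 two_ne_zero).symm]

theorem weight_sq_lt_of_mem_support_lagRelation {d : ℕ} {v : Fin d} {γ : Fin d →₀ ℕ}
    (hγ : γ ∈ (lagRelation d v).support) (hne : γ ≠ single v 2) :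
    weight (lagWeight d) γ = weight (lagWeight d) (single v 2) ∧
      weight (lagWeight d ^ 2) (single v 2) < weight (lagWeight d ^ 2) γ := by
  classical
  rw [MvPolynomial.mem_support_iff, lagRelation, coeff_weightedHomogeneousComponent] at hγ
  split_ifs at hγ with hwt
  · rw [← weight_lagWeight_single_two] at hwt
    have hdeg : γ.degree ≤ 2 :=
      (le_totalDegree (MvPolynomial.mem_support_iff.2 hγ)).trans (totalDegree_lagF_le d)
    exact ⟨hwt, weight_sq_single_two_lt (fun i j h => Fin.ext (by simpa [lagWeight] using h))
      (by simp [lagWeight]) hdeg hwt hne⟩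
  · exact absurd rfl hγ

theorem X_last_mem_lagIdeal (e : ℕ) : X (Fin.last e) ∈ lagIdeal (e + 1) :=
  Ideal.subset_span (Or.inr ⟨_, by simp, rfl⟩)

theorem weight_lagWeight_le_of_le_one {e : ℕ} {α : Fin (e + 1) →₀ ℕ} (hα : ∀ i, α i ≤ 1)
    (hlast : α (Fin.last e) = 0) :
    weight (lagWeight (e + 1)) α ≤ (e + 1) * (e + 1 - 1) / 2 :=
  calc weight (lagWeight (e + 1)) α = ∑ i : Fin e, α i.castSucc * ((i : ℕ) + 1) := by
        simp [weight_eq_sum, Fin.sum_univ_castSucc, hlast, lagWeight]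
    _ ≤ ∑ i : Fin e, ((i : ℕ) + 1) :=
        Finset.sum_le_sum fun i _ => by nlinarith [hα i.castSucc]
    _ = ∑ i : Fin (e + 1), (i : ℕ) := by simp [Fin.sum_univ_succ]
    _ = (e + 1) * (e + 1 - 1) / 2 := by
        rw [Fin.sum_univ_eq_sum_range (fun i => i), Finset.sum_range_id]

theorem exists_single_two_le_of_lt_weight {e : ℕ} {α : Fin (e + 1) →₀ ℕ}
    (hlast : α (Fin.last e) = 0) (hα : (e + 1) * (e + 1 - 1) / 2 < weight (lagWeight (e + 1)) α) :
    ∃ v : Fin (e + 1), (v : ℕ) + 1 ≤ e + 1 - 1 ∧ single v 2 ≤ α := by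
  obtain ⟨v, hv⟩ : ∃ v, 2 ≤ α v := by
    by_contra! h
    have := weight_lagWeight_le_of_le_one (fun i => Nat.le_of_lt_succ (h i)) hlast
    omega
  have hv_last : v ≠ Fin.last e := by
    rintro rfl
    omega
  exact ⟨v, by have := Fin.val_lt_last hv_last; omega, single_le_iff.2 hv⟩

theorem monomial_mem_lagIdeal {d n : ℕ} (hn : d * (d - 1) / 2 < n) (α : Fin d →₀ ℕ)
    (hα : weight (lagWeight d) α = n) : monomial α (1 : ℚ) ∈ lagIdeal d := by
  obtain _ | e := d
  · simp [weight_eq_sum] at hα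
    omega
  induction hm : (e + 1) * n - weight (lagWeight (e + 1) ^ 2) α
    using Nat.strong_induction_on generalizing α with
  | _ m ih =>
  have of_weight_sq_lt : ∀ α', weight (lagWeight (e + 1)) α' = n →
      weight (lagWeight (e + 1) ^ 2) α < weight (lagWeight (e + 1) ^ 2) α' →
      monomial α' (1 : ℚ) ∈ lagIdeal (e + 1) := by
    intro α' hα' hlt
    have := weight_sq_le_mul_weight (w := lagWeight (e + 1)) (fun i => i.isLt) α'
    rw [hα'] at this
    exact ih _ (by omega) α' hα' rfl
  by_cases hlast : α (Fin.last e) = 0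
  · obtain ⟨v, hv, hle⟩ := exists_single_two_le_of_lt_weight hlast (hα ▸ hn)
    obtain ⟨β, rfl⟩ : ∃ β, α = β + single v 2 := ⟨α - single v 2, (tsub_add_cancel_of_le hle).symm⟩
    refine monomial_add_mem_of_coeff_ne_zero (lagRelation_mem_lagIdeal _ v)
      (by simp [coeff_single_two_lagRelation hv]) β fun γ hγ hne => ?_
    obtain ⟨hwt, hlt⟩ := weight_sq_lt_of_mem_support_lagRelation hγ hne
    refine of_weight_sq_lt _ (by rw [map_add, hwt, ← map_add, hα]) ?_
    simp only [map_add]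
    omega
  · obtain ⟨β, rfl⟩ : ∃ β, α = β + single (Fin.last e) 1 :=
      ⟨α - single _ 1, (tsub_add_cancel_of_le (single_le_iff.2 (by omega))).symm⟩
    rw [monomial_add_single, pow_one]
    exact Ideal.mul_mem_left _ _ (X_last_mem_lagIdeal e)

/-- In `R_d`, every weighted-homogeneous element of degree `> d(d-1)/2` vanishes,
i.e. every nonzero homogeneous element of `R_d` has degree at most `d(d-1)/2`. -/
theorem lag_top_degree_bound (d n : ℕ) (P : MvPolynomial (Fin d) ℚ)
    (hP : P.IsWeightedHomogeneous (lagWeight d) n) (hn : d * (d - 1) / 2 < n) :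
    P ∈ lagIdeal d := by
  rw [← P.support_sum_monomial_coeff]
  refine Ideal.sum_mem _ fun m hm => ?_
  rw [← mul_one (coeff m P), ← C_mul_monomial]
  exact Ideal.mul_mem_left _ _
    (monomial_mem_lagIdeal hn m (hP (MvPolynomial.mem_support_iff.1 hm)))
end

section
/- In the ring R_d = ℚ[u_1,…,u_d]/((1+∑_{j=1}^{d-1}u_j)(1+∑_{j=1}^{d-1}(-1)^j u_j) = 1, u_d = 0), the monomials u_{j_1}⋯u_{j_m} with 1 ≤ j_1 < ⋯ < j_m < d (together with 1) form a ℚ-vector space basis. -/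
/-!
For `1 ≤ k < d` the degree-`2k` component of `F` is
`G_k = (-1)^k u_k² + 2 ∑_{0 ≤ i < k} (-1)^i u_i u_{2k-i}` (with `u_0 = 1` and `u_j = 0` for
`j ≥ d`), and all other positive-degree components vanish: the odd ones because the substitution
`u_j ↦ (-1)^j u_j` exchanges the two factors of `F`, the others for degree reasons.
Order monomials of equal weighted degree by `μ ↦ ∑ μ_i 3^i`, larger values being smaller. Then
`u_k²` is the leading monomial of `G_k`; these leading monomials are pairwise coprime, so the
`G_k` together with `u_d` form a Gröbner basis (Buchberger's first criterion) and the standard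
monomials are the squarefree monomials in `u_1, …, u_{d-1}`. Concretely, rewriting
`u_k² ↦ u_k² - G_k / (-1)^k` (at any square) and `u_d ↦ 0` terminates, which gives spanning, and
defines a linear normal form onto the squarefree monomials; since the only overlaps `u_a² u_k²`
resolve, it vanishes on the ideal, which gives linear independence.
-/

open scoped BigOperators

open MvPolynomial

namespace MvPolynomial

variable {σ R K M : Type*}

theorem map_mem_of_forall_monomial_mem [CommSemiring R] [AddCommMonoid M] [Module R M]
    (f : MvPolynomial σ R →ₗ[R] M) (N : Submodule R M) {q : MvPolynomial σ R}
    (hq : ∀ μ ∈ q.support, f (monomial μ 1) ∈ N) : f q ∈ N := by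
  rw [q.as_sum, map_sum]
  refine Submodule.sum_mem _ fun μ hμ => ?_
  rw [← mul_one (coeff μ q), ← smul_eq_mul, ← smul_monomial, map_smul]
  exact N.smul_mem _ (hq μ hμ)

theorem le_and_sub_mem_support_of_mem_support_monomial_mul [CommSemiring R]
    {m τ : σ →₀ ℕ} {q : MvPolynomial σ R} (hτ : τ ∈ (monomial m 1 * q).support) :
    m ≤ τ ∧ τ - m ∈ q.support := by
  classical
  rw [mem_support_iff, coeff_monomial_mul', one_mul] at hτ
  split_ifs at hτ with hm
  · exact ⟨hm, mem_support_iff.2 hτ⟩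
  · exact absurd rfl hτ

theorem map_mul_eq_zero_of_forall_monomial [CommSemiring R] [AddCommMonoid M] [Module R M]
    (f : MvPolynomial σ R →ₗ[R] M) {q g : MvPolynomial σ R}
    (hq : ∀ μ ∈ q.support, f (monomial μ 1 * g) = 0) : f (q * g) = 0 := by
  simpa using
    map_mem_of_forall_monomial_mem (f ∘ₗ LinearMap.mulRight R g) ⊥ (by simpa using hq)

theorem monomial_eq_monomial_sub_mul_X_pow [CommSemiring R] {μ : σ →₀ ℕ} {a : σ} {k : ℕ}
    (hk : k ≤ μ a) : monomial μ (1 : R) = monomial (μ - Finsupp.single a k) 1 * X a ^ k := by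
  rw [X_pow_eq_monomial, monomial_mul, mul_one,
    tsub_add_cancel_of_le (Finsupp.single_le_iff.2 hk)]

theorem monomial_eq_prod_X_of_le_one [CommSemiring R] {μ : σ →₀ ℕ}
    (hμ : ∀ i, μ i ≤ 1) :
    monomial μ (1 : R) = ∏ i ∈ μ.support, X i := by
  rw [← prod_X_pow_eq_monomial]
  refine Finset.prod_congr rfl fun i hi => ?_
  rw [show μ i = 1 by have := Finsupp.mem_support_iff.1 hi; have := hμ i; omega, pow_one]

theorem prod_X_eq_monomial_toFinsupp [CommSemiring R] [DecidableEq σ] (S : Finset σ) :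
    ∏ i ∈ S, X i = monomial (Multiset.toFinsupp S.val) (1 : R) := by
  rw [monomial_eq_prod_X_of_le_one (Multiset.nodup_iff_count_le_one.1 S.nodup),
    Multiset.toFinsupp_support, Finset.val_toFinset]

theorem aeval_C_mul_X_monomial [CommSemiring R] (t : σ → R) (μ : σ →₀ ℕ) (a : R) :
    aeval (fun i => C (t i) * X i) (monomial μ a) =
      monomial μ ((μ.prod fun i k => t i ^ k) * a) := by
  rw [aeval_monomial, algebraMap_eq, Finsupp.prod]
  simp_rw [mul_pow, Finset.prod_mul_distrib, ← map_pow, ← map_prod, prod_X_pow_eq_monomial,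
    C_mul_monomial, mul_one, mul_comm a, Finsupp.prod]

theorem coeff_aeval_C_mul_X [CommSemiring R] (t : σ → R) (φ : MvPolynomial σ R)
    (μ : σ →₀ ℕ) :
    coeff μ (aeval (fun i => C (t i) * X i) φ) = (μ.prod fun i k => t i ^ k) * coeff μ φ := by
  classical
  induction φ using MvPolynomial.induction_on' with
  | monomial ν a =>
    rw [aeval_C_mul_X_monomial, coeff_monomial, coeff_monomial]
    split_ifs with h <;> simp [h]
  | add φ ψ hφ hψ => rw [map_add, coeff_add, coeff_add, hφ, hψ, mul_add]

variable [Field K]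

noncomputable def reductionIdeal (p : σ → Prop) (G : σ → MvPolynomial σ K) :
    Ideal (MvPolynomial σ K) :=
  Ideal.span (G '' {i | p i} ∪ X '' {i | ¬ p i})

structure IsSquareLeading (p : σ → Prop) (G : σ → MvPolynomial σ K)
    (r : (σ →₀ ℕ) → (σ →₀ ℕ) → Prop) : Prop where
  wf : WellFounded r
  add_right : ∀ {τ μ : σ →₀ ℕ} (ρ : σ →₀ ℕ), r τ μ → r (τ + ρ) (μ + ρ)
  coeff_ne_zero : ∀ i, p i → coeff (Finsupp.single i 2) (G i) ≠ 0
  lt_of_mem_support :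
    ∀ i, p i → ∀ τ ∈ (G i).support, τ ≠ Finsupp.single i 2 → r τ (Finsupp.single i 2)

noncomputable def sqTail (G : σ → MvPolynomial σ K) (i : σ) : MvPolynomial σ K :=
  X i ^ 2 - (coeff (Finsupp.single i 2) (G i))⁻¹ • G i

variable {p : σ → Prop} {G : σ → MvPolynomial σ K}
  {r : (σ →₀ ℕ) → (σ →₀ ℕ) → Prop}

theorem X_sq_sub_sqTail_mem_reductionIdeal {i : σ} (hi : p i) :
    X i ^ 2 - sqTail G i ∈ reductionIdeal p G := by
  rw [sqTail, sub_sub_cancel, smul_eq_C_mul]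
  exact Ideal.mul_mem_left _ _ (Ideal.subset_span (Or.inl ⟨i, hi, rfl⟩))

theorem X_mem_reductionIdeal {j : σ} (hj : ¬ p j) : X j ∈ reductionIdeal p G :=
  Ideal.subset_span (Or.inr ⟨j, hj, rfl⟩)

namespace IsSquareLeading

theorem lt_of_mem_support_sqTail (h : IsSquareLeading p G r) {i : σ} (hi : p i) {τ : σ →₀ ℕ}
    (hτ : τ ∈ (sqTail G i).support) : r τ (Finsupp.single i 2) := by
  classical
  have hc := h.coeff_ne_zero i hi
  rw [mem_support_iff, sqTail, coeff_sub, coeff_smul, X_pow_eq_monomial, coeff_monomial] at hτ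
  by_cases hτi : τ = Finsupp.single i 2
  · subst hτi
    simp [hc] at hτ
  · refine h.lt_of_mem_support i hi τ (mem_support_iff.2 fun h0 => hτ ?_) hτi
    simp [h0, Ne.symm hτi]

theorem lt_of_mem_support_monomial_mul_sqTail (h : IsSquareLeading p G r) {a : σ} (ha : p a)
    {m τ : σ →₀ ℕ} (hτ : τ ∈ (monomial m 1 * sqTail G a).support) (ρ : σ →₀ ℕ) :
    r (τ + ρ) (m + Finsupp.single a 2 + ρ) := by
  obtain ⟨hle, hmem⟩ := le_and_sub_mem_support_of_mem_support_monomial_mul hτ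
  convert h.add_right (m + ρ) (h.lt_of_mem_support_sqTail ha hmem) using 1
  · rw [← add_assoc, tsub_add_cancel_of_le hle]
  · abel

theorem lt_of_mem_support_reduction (h : IsSquareLeading p G r) {a : σ} (ha : p a)
    {μ τ : σ →₀ ℕ} (hμ : 2 ≤ μ a)
    (hτ : τ ∈ (monomial (μ - Finsupp.single a 2) 1 * sqTail G a).support) : r τ μ := by
  simpa [tsub_add_cancel_of_le (Finsupp.single_le_iff.2 hμ)] using
    h.lt_of_mem_support_monomial_mul_sqTail ha hτ 0

open scoped Classical in
noncomputable def normalFormMonomial (h : IsSquareLeading p G r) :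
    (σ →₀ ℕ) → ({S : Finset σ // ∀ i ∈ S, p i} →₀ K) :=
  h.wf.fix fun μ IH =>
    if hk : ∃ j, ¬ p j ∧ μ j ≠ 0 then 0
    else if hsq : ∃ a, p a ∧ 2 ≤ μ a then
      ∑ τ ∈ (monomial (μ - Finsupp.single hsq.choose 2) 1 *
          sqTail G hsq.choose).support.attach,
        coeff τ.1 (monomial (μ - Finsupp.single hsq.choose 2) 1 * sqTail G hsq.choose) •
          IH τ.1 (h.lt_of_mem_support_reduction hsq.choose_spec.1 hsq.choose_spec.2 τ.2)
    else Finsupp.single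
      ⟨μ.support, fun j hj => by_contra fun hpj =>
        hk ⟨j, hpj, Finsupp.mem_support_iff.1 hj⟩⟩ 1

noncomputable def normalForm (h : IsSquareLeading p G r) :
    MvPolynomial σ K →ₗ[K] ({S : Finset σ // ∀ i ∈ S, p i} →₀ K) :=
  (basisMonomials σ K).constr K h.normalFormMonomial

theorem normalForm_monomial (h : IsSquareLeading p G r) (μ : σ →₀ ℕ) :
    h.normalForm (monomial μ 1) = h.normalFormMonomial μ :=
  (basisMonomials σ K).constr_basis K _ μ

theorem normalForm_apply (h : IsSquareLeading p G r) (q : MvPolynomial σ K) :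
    h.normalForm q = ∑ μ ∈ q.support, coeff μ q • h.normalFormMonomial μ := by
  conv_lhs => rw [q.as_sum, map_sum]
  refine Finset.sum_congr rfl fun μ _ => ?_
  rw [← mul_one (coeff μ q), ← smul_eq_mul, ← smul_monomial, map_smul, normalForm_monomial,
    smul_eq_mul, mul_one]

theorem normalFormMonomial_eq_zero (h : IsSquareLeading p G r) {μ : σ →₀ ℕ} {j : σ}
    (hj : ¬ p j) (hμ : μ j ≠ 0) : h.normalFormMonomial μ = 0 := by
  rw [normalFormMonomial, WellFounded.fix_eq, dif_pos ⟨j, hj, hμ⟩]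

theorem normalFormMonomial_of_sq (h : IsSquareLeading p G r) {μ : σ →₀ ℕ}
    (hk : ∀ j, ¬ p j → μ j = 0) (hsq : ∃ a, p a ∧ 2 ≤ μ a) :
    h.normalFormMonomial μ =
      h.normalForm (monomial (μ - Finsupp.single hsq.choose 2) 1 * sqTail G hsq.choose) := by
  rw [normalFormMonomial, WellFounded.fix_eq, dif_neg (by simpa using hk), dif_pos hsq,
    normalForm_apply]
  exact Finset.sum_attach _ fun τ => coeff τ _ • h.normalFormMonomial τ

theorem normalFormMonomial_of_sqfree (h : IsSquareLeading p G r) {μ : σ →₀ ℕ}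
    (hk : ∀ j, ¬ p j → μ j = 0) (hsq : ∀ a, μ a ≤ 1) :
    h.normalFormMonomial μ = Finsupp.single ⟨μ.support, fun j hj => by_contra fun hpj =>
      Finsupp.mem_support_iff.1 hj (hk j hpj)⟩ 1 := by
  rw [normalFormMonomial, WellFounded.fix_eq, dif_neg (by simpa using hk),
    dif_neg (by simpa using fun a _ => hsq a)]

theorem mk_monomial_mem_span (h : IsSquareLeading p G r) (μ : σ →₀ ℕ) :
    Ideal.Quotient.mk (reductionIdeal p G) (monomial μ 1) ∈
      Submodule.span K (Set.range fun S : {S : Finset σ // ∀ i ∈ S, p i} =>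
        Ideal.Quotient.mk (reductionIdeal p G) (∏ i ∈ S.1, X i)) := by
  induction μ using h.wf.induction with
  | _ μ IH =>
  by_cases hk : ∃ j, ¬ p j ∧ μ j ≠ 0
  · obtain ⟨j, hj, hμj⟩ := hk
    have hmem : monomial μ 1 ∈ reductionIdeal p G := by
      rw [monomial_eq_monomial_sub_mul_X_pow (a := j) (k := 1) (Nat.one_le_iff_ne_zero.2 hμj),
        pow_one]
      exact Ideal.mul_mem_left _ _ (X_mem_reductionIdeal hj)
    rw [Ideal.Quotient.eq_zero_iff_mem.2 hmem]
    exact zero_mem _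
  push Not at hk
  by_cases hsq : ∃ a, p a ∧ 2 ≤ μ a
  · obtain ⟨a, ha, hμa⟩ := hsq
    have hred : Ideal.Quotient.mk (reductionIdeal p G) (monomial μ 1) =
        Ideal.Quotient.mk _ (monomial (μ - Finsupp.single a 2) 1 * sqTail G a) := by
      rw [Ideal.Quotient.eq, monomial_eq_monomial_sub_mul_X_pow hμa, ← mul_sub]
      exact Ideal.mul_mem_left _ _ (X_sq_sub_sqTail_mem_reductionIdeal ha)
    rw [hred]
    exact map_mem_of_forall_monomial_mem (Ideal.Quotient.mkₐ K _).toLinearMap _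
      fun τ hτ => IH τ (h.lt_of_mem_support_reduction ha hμa hτ)
  · push Not at hsq
    have hμ1 : ∀ i, μ i ≤ 1 := fun i => by
      by_cases hi : p i
      · have := hsq i hi; omega
      · simp [hk i hi]
    rw [monomial_eq_prod_X_of_le_one hμ1]
    exact Submodule.subset_span ⟨⟨μ.support, fun j hj => by_contra fun hpj =>
      Finsupp.mem_support_iff.1 hj (hk j hpj)⟩, rfl⟩

theorem normalForm_monomial_mul_eq_zero (h : IsSquareLeading p G r) {m : σ →₀ ℕ} {j : σ}
    (hj : ¬ p j) (hm : m j ≠ 0) (q : MvPolynomial σ K) :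
    h.normalForm (monomial m 1 * q) = 0 := by
  rw [← Submodule.mem_bot K]
  refine map_mem_of_forall_monomial_mem _ _ fun τ hτ => ?_
  have hle := (le_and_sub_mem_support_of_mem_support_monomial_mul hτ).1 j
  rw [Submodule.mem_bot, normalForm_monomial, h.normalFormMonomial_eq_zero hj (by omega)]

theorem normalForm_monomial_mul_X_sq_sub_sqTail (h : IsSquareLeading p G r) {i : σ} (hi : p i)
    (m : σ →₀ ℕ) : h.normalForm (monomial m 1 * (X i ^ 2 - sqTail G i)) = 0 := by
  suffices ∀ ν m i, p i → m + Finsupp.single i 2 = ν →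
      h.normalForm (monomial m 1 * (X i ^ 2 - sqTail G i)) = 0 from this _ m i hi rfl
  intro ν
  induction ν using h.wf.induction with
  | _ ν IH =>
  rintro m i hi rfl
  have hIH : ∀ {b : σ}, p b → ∀ q : MvPolynomial σ K,
      (∀ τ ∈ q.support, r (τ + Finsupp.single b 2) (m + Finsupp.single i 2)) →
        h.normalForm (q * (X b ^ 2 - sqTail G b)) = 0 := fun hb q hq =>
    map_mul_eq_zero_of_forall_monomial _ fun τ hτ => IH _ (hq τ hτ) τ _ hb rfl
  rw [mul_sub, X_pow_eq_monomial, monomial_mul, mul_one, map_sub, normalForm_monomial,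
    sub_eq_zero]
  by_cases hk : ∃ j, ¬ p j ∧ (m + Finsupp.single i 2 : σ →₀ ℕ) j ≠ 0
  · obtain ⟨j, hj, hνj⟩ := hk
    have hmj : m j ≠ 0 := by
      simpa [Finsupp.single_apply, show i ≠ j by rintro rfl; exact hj hi] using hνj
    rw [h.normalFormMonomial_eq_zero hj hνj, h.normalForm_monomial_mul_eq_zero hj hmj]
  push Not at hk
  have hsq : ∃ a, p a ∧ 2 ≤ (m + Finsupp.single i 2 : σ →₀ ℕ) a := ⟨i, hi, by simp⟩
  rw [h.normalFormMonomial_of_sq hk hsq]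
  obtain ⟨ha, hνa⟩ := hsq.choose_spec
  generalize hsq.choose = a at ha hνa ⊢
  by_cases hai : a = i
  · rw [hai, add_tsub_cancel_right]
  -- the overlap `X a ^ 2 * X i ^ 2`: reducing either square first leads to
  -- `sqTail G a * sqTail G i`
  have hma : 2 ≤ m a := by simpa [Finsupp.single_apply, Ne.symm hai] using hνa
  obtain ⟨μ, rfl⟩ : ∃ μ, m = μ + Finsupp.single a 2 :=
    ⟨m - Finsupp.single a 2, (tsub_add_cancel_of_le (Finsupp.single_le_iff.2 hma)).symm⟩
  have hsplit : ∀ b c : σ, monomial (μ + Finsupp.single b 2) (1 : K) * sqTail G c =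
      monomial μ 1 * sqTail G c * (X b ^ 2 - sqTail G b) +
        monomial μ 1 * (sqTail G b * sqTail G c) :=
    fun b c => by
      rw [show monomial (μ + Finsupp.single b 2) (1 : K) = monomial μ 1 * X b ^ 2 by
        rw [X_pow_eq_monomial, monomial_mul, mul_one]]
      ring
  rw [add_right_comm, add_tsub_cancel_right, hsplit, hsplit, map_add, map_add,
    hIH hi _ fun τ hτ => h.lt_of_mem_support_monomial_mul_sqTail ha hτ _,
    hIH ha _ fun τ hτ => add_right_comm μ (Finsupp.single a 2) (Finsupp.single i 2) ▸
      h.lt_of_mem_support_monomial_mul_sqTail hi hτ _, mul_comm (sqTail G a)]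

theorem normalForm_eq_zero_of_mem (h : IsSquareLeading p G r) {q : MvPolynomial σ K}
    (hq : q ∈ reductionIdeal p G) : h.normalForm q = 0 := by
  suffices ∀ s, h.normalForm (s * q) = 0 by simpa using this 1
  induction hq using Submodule.span_induction with
  | mem g hg =>
    intro s
    rcases hg with ⟨i, hi, rfl⟩ | ⟨j, hj, rfl⟩
    · have hG : G i = C (coeff (Finsupp.single i 2) (G i)) * (X i ^ 2 - sqTail G i) := by
        rw [sqTail, sub_sub_cancel, smul_eq_C_mul, ← mul_assoc, ← C_mul,
          mul_inv_cancel₀ (h.coeff_ne_zero i hi), C_1, one_mul]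
      rw [hG, ← mul_assoc]
      exact map_mul_eq_zero_of_forall_monomial _ fun τ _ =>
        h.normalForm_monomial_mul_X_sq_sub_sqTail hi τ
    · refine map_mul_eq_zero_of_forall_monomial _ fun τ _ => ?_
      rw [X, monomial_mul, mul_one, normalForm_monomial]
      exact h.normalFormMonomial_eq_zero hj (by simp)
  | zero => simp
  | add x y _ _ hx hy => intro s; rw [mul_add, map_add, hx, hy, add_zero]
  | smul a x _ hx => intro s; rw [smul_eq_mul, ← mul_assoc]; exact hx _

theorem normalForm_prod_X (h : IsSquareLeading p G r) (S : {S : Finset σ // ∀ i ∈ S, p i}) :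
    h.normalForm (∏ i ∈ S.1, X i) = Finsupp.single S 1 := by
  classical
  have hsupp : (Multiset.toFinsupp S.1.val).support = S.1 := by
    rw [Multiset.toFinsupp_support, Finset.val_toFinset]
  rw [prod_X_eq_monomial_toFinsupp, normalForm_monomial,
    h.normalFormMonomial_of_sqfree (fun j hj => ?_)
      (Multiset.nodup_iff_count_le_one.1 S.1.nodup)]
  · exact congrArg (Finsupp.single · 1) (Subtype.ext hsupp)
  · rw [← Finsupp.notMem_support_iff, hsupp]
    exact fun hjS => hj (S.2 j hjS)

theorem exists_basis (h : IsSquareLeading p G r) :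
    ∃ b : Module.Basis {S : Finset σ // ∀ i ∈ S, p i} K
        (MvPolynomial σ K ⧸ reductionIdeal p G),
      ∀ S, b S = Ideal.Quotient.mk (reductionIdeal p G) (∏ i ∈ S.1, X i) := by
  let v := fun S : {S : Finset σ // ∀ i ∈ S, p i} => ∏ i ∈ S.1, (X i : MvPolynomial σ K)
  have hv : ∀ l, h.normalForm (Finsupp.linearCombination K v l) = l := fun l => by
    simp [Finsupp.linearCombination_apply, map_finsuppSum, v, normalForm_prod_X]
  have hli : LinearIndependent K (Ideal.Quotient.mk (reductionIdeal p G) ∘ v) := by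
    rw [linearIndependent_iff]
    intro l hl
    have hmem : Finsupp.linearCombination K v l ∈ reductionIdeal p G := by
      rw [← Ideal.Quotient.eq_zero_iff_mem, ← hl]
      exact Finsupp.apply_linearCombination K (Ideal.Quotient.mkₐ K _).toLinearMap v l
    rw [← hv l, h.normalForm_eq_zero_of_mem hmem]
  have hsp :
      ⊤ ≤ Submodule.span K (Set.range (Ideal.Quotient.mk (reductionIdeal p G) ∘ v)) := by
    rintro x -
    obtain ⟨q, rfl⟩ := Ideal.Quotient.mk_surjective x
    exact map_mem_of_forall_monomial_mem (Ideal.Quotient.mkₐ K _).toLinearMap _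
      fun μ _ => h.mk_monomial_mem_span μ
  exact ⟨Module.Basis.mk hli hsp, fun S => Module.Basis.mk_apply hli hsp S⟩

end IsSquareLeading
end MvPolynomial

noncomputable def lagLinear (d : ℕ) (c : Fin d → ℚ) : MvPolynomial (Fin d) ℚ :=
  ∑ i ∈ Finset.univ.filter (fun i : Fin d => (i : ℕ) + 1 < d), C (c i) * X i

theorem lagF_eq (d : ℕ) :
    lagF d = lagLinear d 1 + lagLinear d (fun i => (-1) ^ lagWeight d i) +
      lagLinear d 1 * lagLinear d (fun i => (-1) ^ lagWeight d i) := by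
  have hp : ∀ i : Fin d, (i : ℕ) + 1 ≤ d - 1 ↔ (i : ℕ) + 1 < d := fun i => by omega
  simp only [lagF, lagLinear, lagWeight, Finset.sum_filter, hp, Pi.one_apply, map_one, one_mul,
    map_pow, map_neg]
  ring

theorem aeval_lagLinear {d : ℕ} (t c : Fin d → ℚ) :
    aeval (fun i => C (t i) * X i) (lagLinear d c) = lagLinear d (c * t) := by
  simp only [lagLinear, map_sum, map_mul, aeval_C, aeval_X, algebraMap_eq, Pi.mul_apply, map_mul]
  exact Finset.sum_congr rfl fun i _ => by ring

theorem aeval_neg_one_pow_lagF (d : ℕ) :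
    aeval (fun i => C ((-1) ^ lagWeight d i) * X i) (lagF d) = lagF d := by
  have hsq : ((fun i => (-1 : ℚ) ^ lagWeight d i) * fun i => (-1) ^ lagWeight d i) = 1 := by
    ext i; simp [← pow_add, ← two_mul]
  rw [lagF_eq, map_add, map_add, map_mul, aeval_lagLinear, aeval_lagLinear, one_mul, hsq]
  ring

theorem coeff_lagF_eq_zero_of_odd {d : ℕ} {μ : Fin d →₀ ℕ}
    (hμ : Odd (Finsupp.weight (lagWeight d) μ)) : coeff μ (lagF d) = 0 := by
  have h := coeff_aeval_C_mul_X (fun i => (-1 : ℚ) ^ lagWeight d i) (lagF d) μ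
  simp_rw [aeval_neg_one_pow_lagF, ← pow_mul] at h
  rw [Finsupp.prod, Finset.prod_pow_eq_pow_sum] at h
  rw [show ∑ i ∈ μ.support, lagWeight d i * μ i = Finsupp.weight (lagWeight d) μ by
    simp [Finsupp.weight_apply, Finsupp.sum, mul_comm], hμ.neg_one_pow] at h
  linarith

theorem support_lagLinear_subset {d : ℕ} (c : Fin d → ℚ) :
    (lagLinear d c).support ⊆
      (Finset.univ.filter fun i : Fin d => (i : ℕ) + 1 < d).image (Finsupp.single · 1) := by
  intro μ hμ
  obtain ⟨i, hi, hμi⟩ := Finset.mem_biUnion.1 (support_sum hμ)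
  rw [C_mul_X_eq_monomial] at hμi
  rw [Finset.mem_singleton.1 (support_monomial_subset hμi)]
  exact Finset.mem_image_of_mem _ hi

theorem mem_support_lagF {d : ℕ} {μ : Fin d →₀ ℕ} (hμ : μ ∈ (lagF d).support) :
    (∃ a : Fin d, (a : ℕ) + 1 < d ∧ μ = Finsupp.single a 1) ∨
      ∃ a b : Fin d, (a : ℕ) + 1 < d ∧ (b : ℕ) + 1 < d ∧
        μ = Finsupp.single a 1 + Finsupp.single b 1 := by
  classical
  rw [lagF_eq] at hμ
  have hlin : ∀ c, ∀ ν ∈ (lagLinear d c).support,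
      ∃ a : Fin d, (a : ℕ) + 1 < d ∧ ν = Finsupp.single a 1 := fun c ν hν => by
    obtain ⟨a, ha, rfl⟩ := Finset.mem_image.1 (support_lagLinear_subset c hν)
    exact ⟨a, (Finset.mem_filter.1 ha).2, rfl⟩
  rcases Finset.mem_union.1 (support_add hμ) with hμ | hμ
  · rcases Finset.mem_union.1 (support_add hμ) with hμ | hμ
    · exact Or.inl (hlin _ μ hμ)
    · exact Or.inl (hlin _ μ hμ)
  · obtain ⟨α, hα, β, hβ, rfl⟩ := Finset.mem_add.1 (support_mul _ _ hμ)
    obtain ⟨a, ha, rfl⟩ := hlin _ α hα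
    obtain ⟨b, hb, rfl⟩ := hlin _ β hβ
    exact Or.inr ⟨a, b, ha, hb, rfl⟩

theorem exists_weight_eq_of_mem_support_lagF {d : ℕ} {μ : Fin d →₀ ℕ}
    (hμ : μ ∈ (lagF d).support) :
    ∃ i : Fin d, (i : ℕ) + 1 < d ∧ Finsupp.weight (lagWeight d) μ = 2 * ((i : ℕ) + 1) := by
  have hbound : 1 ≤ Finsupp.weight (lagWeight d) μ ∧
      Finsupp.weight (lagWeight d) μ ≤ 2 * (d - 1) := by
    rcases mem_support_lagF hμ with ⟨a, ha, rfl⟩ | ⟨a, b, ha, hb, rfl⟩ <;>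
      simp only [map_add, Finsupp.weight_single, lagWeight, smul_eq_mul, one_mul] <;> omega
  obtain ⟨k, hk⟩ := (Nat.even_or_odd _).resolve_right fun hodd =>
    Finsupp.mem_support_iff.1 hμ (coeff_lagF_eq_zero_of_odd hodd)
  exact ⟨⟨k - 1, by omega⟩, by dsimp only; omega, by dsimp only; omega⟩

theorem coeff_single_two_lagF {d : ℕ} {i : Fin d} (hi : (i : ℕ) + 1 < d) :
    coeff (Finsupp.single i 2) (lagF d) = (-1) ^ lagWeight d i := by
  classical
  have hlin : ∀ c, coeff (Finsupp.single i 2) (lagLinear d c) = 0 := fun c => by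
    refine Finsupp.notMem_support_iff.1 fun h => ?_
    obtain ⟨a, -, ha⟩ := Finset.mem_image.1 (support_lagLinear_subset c h)
    simp [Finsupp.single_eq_single_iff] at ha
  have hsq : ∀ a b : Fin d,
      Finsupp.single a 1 + Finsupp.single b 1 = Finsupp.single i 2 ↔ a = i ∧ b = i :=
    fun a b => by
    rw [show (2 : ℕ) = 1 + 1 from rfl, Finsupp.single_add,
      Finsupp.single_add_single_eq_single_add_single one_ne_zero one_ne_zero]
    omega
  rw [lagF_eq, coeff_add, coeff_add, hlin, hlin, zero_add, zero_add, lagLinear, lagLinear,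
    Finset.sum_mul_sum, coeff_sum]
  simp_rw [coeff_sum, C_mul_X_eq_monomial, monomial_mul, coeff_monomial, hsq, ite_and]
  simp [Finset.sum_ite_eq', hi]

/-- Base `3` makes `2 * 3 ^ i < 3 ^ j` for `i < j`, which puts `X i ^ 2` on top of the relation
of weighted degree `2 * (i + 1)`. -/
def lagLT (d : ℕ) (τ μ : Fin d →₀ ℕ) : Prop :=
  Finsupp.weight (lagWeight d) τ = Finsupp.weight (lagWeight d) μ ∧
    Finsupp.weight (fun i : Fin d => 3 ^ (i : ℕ)) μ <
      Finsupp.weight (fun i : Fin d => 3 ^ (i : ℕ)) τ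

theorem weight_three_pow_le {d : ℕ} (μ : Fin d →₀ ℕ) :
    Finsupp.weight (fun i : Fin d => 3 ^ (i : ℕ)) μ ≤
      3 ^ d * Finsupp.weight (lagWeight d) μ := by
  simp only [Finsupp.weight_eq_sum, Finset.mul_sum, smul_eq_mul, lagWeight]
  refine Finset.sum_le_sum fun i _ => ?_
  calc μ i * 3 ^ (i : ℕ) ≤ μ i * 3 ^ d :=
        Nat.mul_le_mul_left _ (Nat.pow_le_pow_right (by norm_num) i.isLt.le)
    _ ≤ μ i * ((i : ℕ) + 1) * 3 ^ d :=
        Nat.mul_le_mul_right _ (Nat.le_mul_of_pos_right _ (Nat.succ_pos _))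
    _ = 3 ^ d * (μ i * ((i : ℕ) + 1)) := mul_comm _ _

theorem lagLT_wf (d : ℕ) : WellFounded (lagLT d) := by
  refine Subrelation.wf (fun {τ μ} h => ?_) (InvImage.wf (fun μ =>
    3 ^ d * Finsupp.weight (lagWeight d) μ - Finsupp.weight (fun i : Fin d => 3 ^ (i : ℕ)) μ)
    wellFounded_lt)
  obtain ⟨hw, hlt⟩ := h
  have hτ := weight_three_pow_le τ
  have hμ := weight_three_pow_le μ
  rw [hw] at hτ
  simp only [InvImage, hw]
  omega

theorem lagLT_single_two {d : ℕ} {i : Fin d} {τ : Fin d →₀ ℕ}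
    (hτ : τ ∈ (lagF d).support)
    (hw : Finsupp.weight (lagWeight d) τ = 2 * ((i : ℕ) + 1)) (hne : τ ≠ Finsupp.single i 2) :
    lagLT d τ (Finsupp.single i 2) := by
  have h3 : 0 < 3 ^ (i : ℕ) := by positivity
  have hpow : ∀ j : Fin d, (i : ℕ) < j → 3 * 3 ^ (i : ℕ) ≤ 3 ^ (j : ℕ) := fun j hj => by
    rw [← pow_succ']; exact Nat.pow_le_pow_right (by norm_num) hj
  refine ⟨by simp [hw, Finsupp.weight_single, lagWeight, mul_comm], ?_⟩
  rcases mem_support_lagF hτ with ⟨a, -, rfl⟩ | ⟨a, b, -, -, rfl⟩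
  · simp only [Finsupp.weight_single, lagWeight, smul_eq_mul] at hw ⊢
    have := hpow a (by omega)
    omega
  · simp only [map_add, Finsupp.weight_single, lagWeight, smul_eq_mul] at hw ⊢
    have hab : (i : ℕ) < a ∨ (i : ℕ) < b := by
      by_contra! h
      rw [Fin.ext (show (a : ℕ) = i by omega), Fin.ext (show (b : ℕ) = i by omega),
        ← Finsupp.single_add] at hne
      exact hne rfl
    rcases hab with h | h
    · have := hpow a h; omega
    · have := hpow b h; omega

theorem isSquareLeading_lagF (d : ℕ) :
    IsSquareLeading (fun i : Fin d => (i : ℕ) + 1 < d)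
      (fun i => weightedHomogeneousComponent (lagWeight d) (2 * ((i : ℕ) + 1)) (lagF d))
      (lagLT d) where
  wf := lagLT_wf d
  add_right ρ h := by simp only [lagLT, map_add] at h ⊢; omega
  coeff_ne_zero i hi := by
    classical
    rw [coeff_weightedHomogeneousComponent,
      if_pos (by simp [Finsupp.weight_single, lagWeight, mul_comm]), coeff_single_two_lagF hi]
    exact pow_ne_zero _ (by norm_num)
  lt_of_mem_support i _ τ hτ hne := by
    classical
    rw [support_weightedHomogeneousComponent, Finset.mem_filter] at hτ
    exact lagLT_single_two hτ.1 hτ.2 hne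

theorem lagIdeal_eq_reductionIdeal (d : ℕ) :
    lagIdeal d = reductionIdeal (fun i : Fin d => (i : ℕ) + 1 < d)
      (fun i => weightedHomogeneousComponent (lagWeight d) (2 * ((i : ℕ) + 1)) (lagF d)) := by
  refine le_antisymm (Ideal.span_le.2 ?_) (Ideal.span_le.2 ?_)
  · rintro g (⟨n, hn, rfl⟩ | ⟨j, hj, rfl⟩)
    · by_cases h : ∃ i : Fin d, (i : ℕ) + 1 < d ∧ 2 * ((i : ℕ) + 1) = n
      · obtain ⟨i, hi, rfl⟩ := h
        exact Ideal.subset_span (Or.inl ⟨i, hi, rfl⟩)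
      · rw [weightedHomogeneousComponent_eq_zero' _ _ fun μ hμ hμn => ?_]
        · exact zero_mem _
        obtain ⟨i, hi, hμi⟩ := exists_weight_eq_of_mem_support_lagF hμ
        exact h ⟨i, hi, hμi ▸ hμn⟩
    · exact Ideal.subset_span (Or.inr ⟨j, (by omega : ¬ (j : ℕ) + 1 < d), rfl⟩)
  · rintro g (⟨i, hi, rfl⟩ | ⟨j, hj, rfl⟩)
    · exact Ideal.subset_span (Or.inl ⟨_, by omega, rfl⟩)
    · exact Ideal.subset_span (Or.inr ⟨j, by rw [Set.mem_ofPred_eq] at hj; omega, rfl⟩)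

/-- The monomials `u_{j_1} ⋯ u_{j_m}` with `1 ≤ j_1 < ⋯ < j_m < d` (including the
empty product `1`) form a `ℚ`-vector space basis of `R_d`. -/
theorem lag_basis (d : ℕ) :
    ∃ b : Module.Basis {S : Finset (Fin d) // ∀ i ∈ S, (i : ℕ) + 1 < d} ℚ
        (MvPolynomial (Fin d) ℚ ⧸ lagIdeal d),
      ∀ S, b S = Ideal.Quotient.mk (lagIdeal d) (∏ i ∈ S.1, MvPolynomial.X i) := by
  rw [lagIdeal_eq_reductionIdeal]
  exact (isSquareLeading_lagF d).exists_basis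
end
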